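/- For any w ∈ ℝ^L and ε > 0, argmax^ε(w) = {j ∈ [L] : w_j > t_ε(w)}; that is, the inflated argmax of w is exactly the set of coordinates exceeding the threshold t_ε(w). -/

import Mathlib

noncomputable section

/-- The set `R_j^ε = {w ∈ ℝ^L : w_j ≥ max_{ℓ≠j} w_ℓ + ε/√2}`. -/
def Rset (L : ℕ) (ε : ℝ) (j : Fin L) : Set (EuclideanSpace ℝ (Fin L)) :=
  {w | ∀ ℓ : Fin L, ℓ ≠ j → w ℓ + ε / Real.sqrt 2 ≤ w j}

/-- The inflated argmax: `argmax^ε(w) = {j ∈ [L] : dist(w, R_j^ε) < ε}`. -/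
def inflatedArgmax (L : ℕ) (ε : ℝ) (w : EuclideanSpace ℝ (Fin L)) : Set (Fin L) :=
  {j | Metric.infDist w (Rset L ε j) < ε}

/-!
Write `λ_i = (w_i - c)_+` and `S = Σ λ_i`. The equation for `c` reads `ε² = S² + Σ λ_i² ≤ 2 S²`,
so `ε/√2 ≤ S`. If `w_j > t_ε(w)`, lowering every other coordinate to `c` and raising `w_j` to
`c + ε/√2` reaches `R_j^ε` at squared distance at most `(c + ε/√2 - w_j)_+² + Σ λ_i² < ε²`.
If `w_j ≤ t_ε(w)`, then `λ_j = 0` and the vector `u = λ - S e_j` has norm `ε` and satisfies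
`⟪w - v, u⟫ ≥ ‖u‖²` for every `v ∈ R_j^ε`, so Cauchy–Schwarz gives `dist(w, R_j^ε) ≥ ε`.
-/

open Finset Metric
open scoped InnerProductSpace

theorem norm_le_norm_of_sq_le_inner {E : Type*} [NormedAddCommGroup E] [InnerProductSpace ℝ E]
    {x u : E} (h : ‖u‖ ^ 2 ≤ ⟪x, u⟫_ℝ) : ‖u‖ ≤ ‖x‖ := by
  have hcs := real_inner_le_norm x u
  rcases (norm_nonneg u).eq_or_lt with hu | hu
  · exact hu ▸ norm_nonneg x
  · nlinarith

theorem div_sqrt_two_le_of_sq_add_eq {S Q ε : ℝ} (hS : 0 ≤ S) (hQ : Q ≤ S ^ 2)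
    (h : S ^ 2 + Q = ε ^ 2) : ε / √2 ≤ S := by
  rw [div_le_iff₀ (by positivity)]
  refine le_of_sq_le_sq ?_ (by positivity)
  rw [mul_pow, Real.sq_sqrt zero_le_two]
  linarith

theorem sq_sub_max_self (a b : ℝ) : (a - max a b) ^ 2 = max (b - a) 0 ^ 2 := by
  rcases le_total a b with h | h
  · rw [max_eq_right h, max_eq_left (sub_nonneg.2 h)]; ring
  · rw [max_eq_left h, max_eq_right (sub_nonpos.2 h)]; ring

theorem sq_sub_min_self (a b : ℝ) : (a - min a b) ^ 2 = max (a - b) 0 ^ 2 := by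
  rcases le_total a b with h | h
  · rw [min_eq_left h, max_eq_right (sub_nonpos.2 h)]; ring
  · rw [min_eq_right h, max_eq_left (sub_nonneg.2 h)]

theorem max_zero_mul_self_eq_sq (x : ℝ) : max x 0 * x = max x 0 ^ 2 := by
  rcases le_total x 0 with h | h
  · rw [max_eq_right h]; ring
  · rw [max_eq_left h]; ring

section Rset

variable {L : ℕ} {ε : ℝ}

theorem Rset_nonempty (j : Fin L) : (Rset L ε j).Nonempty := by
  refine ⟨EuclideanSpace.single j (ε / √2), fun ℓ hℓ => ?_⟩
  simp [hℓ]

theorem infDist_Rset_le (w : EuclideanSpace ℝ (Fin L)) (j : Fin L) (c : ℝ) :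
    infDist w (Rset L ε j) ≤ √(max (c + ε / √2 - w j) 0 ^ 2 + ∑ i, max (w i - c) 0 ^ 2) := by
  set v : EuclideanSpace ℝ (Fin L) :=
    WithLp.toLp 2 (Function.update (fun i => min (w i) c) j (max (w j) (c + ε / √2)))
  have hv : v ∈ Rset L ε j := fun ℓ hℓ => by
    simp only [v, Function.update_of_ne hℓ, Function.update_self]
    linarith [min_le_right (w ℓ) c, le_max_right (w j) (c + ε / √2)]
  have hcoord : ∀ i, dist (w i) (v i) ^ 2
      ≤ max (w i - c) 0 ^ 2 + (Pi.single j (max (c + ε / √2 - w j) 0 ^ 2) : Fin L → ℝ) i := by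
    intro i
    rcases eq_or_ne i j with rfl | hij
    · simp only [v, Function.update_self, Pi.single_eq_same, Real.dist_eq, sq_abs,
        sq_sub_max_self]
      exact le_add_of_nonneg_left (sq_nonneg _)
    · simp only [v, Function.update_of_ne hij, Pi.single_eq_of_ne hij, Real.dist_eq, sq_abs,
        add_zero, sq_sub_min_self, le_refl]
  calc infDist w (Rset L ε j) ≤ dist w v := infDist_le_dist_of_mem hv
    _ = √(∑ i, dist (w i) (v i) ^ 2) := EuclideanSpace.dist_eq w v
    _ ≤ _ := by
      gcongr
      refine (sum_le_sum fun i _ => hcoord i).trans_eq ?_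
      rw [sum_add_distrib, Fintype.sum_pi_single', add_comm]

def separatingNormal (w : EuclideanSpace ℝ (Fin L)) (c : ℝ) (j : Fin L) :
    EuclideanSpace ℝ (Fin L) :=
  WithLp.toLp 2 fun i => max (w i - c) 0 - if i = j then ∑ k, max (w k - c) 0 else 0

variable {w : EuclideanSpace ℝ (Fin L)} {c : ℝ} {j : Fin L}

theorem norm_separatingNormal (hjc : w j ≤ c) :
    ‖separatingNormal w c j‖ = √((∑ i, max (w i - c) 0) ^ 2 + ∑ i, max (w i - c) 0 ^ 2) := by
  have hj0 : max (w j - c) 0 = 0 := max_eq_right (sub_nonpos.2 hjc)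
  have hcoord : ∀ i, ‖separatingNormal w c j i‖ ^ 2
      = max (w i - c) 0 ^ 2 + if i = j then (∑ k, max (w k - c) 0) ^ 2 else 0 := by
    intro i
    rcases eq_or_ne i j with rfl | hij
    · simp [separatingNormal, hj0]
    · simp [separatingNormal, hij]
  rw [EuclideanSpace.norm_eq, Finset.sum_congr rfl fun i _ => hcoord i, sum_add_distrib,
    sum_ite_eq', if_pos (mem_univ j), add_comm]

theorem sq_norm_separatingNormal_le_inner (hjc : w j ≤ c)
    (hj : w j + ∑ i, max (w i - c) 0 ≤ c + ε / √2) {v : EuclideanSpace ℝ (Fin L)}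
    (hv : v ∈ Rset L ε j) : ‖separatingNormal w c j‖ ^ 2 ≤ ⟪w - v, separatingNormal w c j⟫_ℝ := by
  set lam : Fin L → ℝ := fun i => max (w i - c) 0
  set S := ∑ i, lam i
  have hterm : ∀ i, lam i ^ 2 + S * lam i ≤ lam i * ((w i - v i) - (w j - v j)) := by
    intro i
    rcases eq_or_ne i j with rfl | hij
    · simp [lam, max_eq_right (sub_nonpos.2 hjc)]
    · have hgap : S ≤ (c - w j) + (v j - v i) := by linarith [hv i hij]
      nlinarith [max_zero_mul_self_eq_sq (w i - c), mul_le_mul_of_nonneg_left hgap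
        (le_max_right (w i - c) 0)]
  have hinner : ⟪w - v, separatingNormal w c j⟫_ℝ
      = ∑ i, lam i * ((w i - v i) - (w j - v j)) := by
    simp only [separatingNormal, PiLp.inner_apply, PiLp.sub_apply, RCLike.inner_apply,
      conj_trivial]
    simp only [sub_mul, mul_sub, ite_mul, zero_mul, sum_sub_distrib, sum_ite_eq', mem_univ,
      if_true, ← sum_mul]
    ring
  rw [norm_separatingNormal hjc, Real.sq_sqrt (by positivity), hinner]
  calc S ^ 2 + ∑ i, lam i ^ 2 = ∑ i, (lam i ^ 2 + S * lam i) := by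
        rw [sum_add_distrib, ← mul_sum]; ring
    _ ≤ _ := sum_le_sum fun i _ => hterm i

theorem sqrt_le_infDist_Rset (hjc : w j ≤ c) (hj : w j + ∑ i, max (w i - c) 0 ≤ c + ε / √2) :
    √((∑ i, max (w i - c) 0) ^ 2 + ∑ i, max (w i - c) 0 ^ 2) ≤ infDist w (Rset L ε j) := by
  rw [← norm_separatingNormal hjc]
  refine (le_infDist (Rset_nonempty j)).2 fun v hv => ?_
  rw [dist_eq_norm]
  exact norm_le_norm_of_sq_le_inner (sq_norm_separatingNormal_le_inner hjc hj hv)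

end Rset

theorem inflatedArgmax_eq_threshold_general (L : ℕ) (ε : ℝ) (hε : 0 < ε)
    (w : EuclideanSpace ℝ (Fin L)) (c : ℝ)
    (hc : (∑ j : Fin L, max (w j - c) 0)^2 + ∑ j : Fin L, (max (w j - c) 0)^2 = ε^2) :
    inflatedArgmax L ε w
      = {j : Fin L | w j > c + ε / Real.sqrt 2 - ∑ k : Fin L, max (w k - c) 0} := by
  set S := ∑ k : Fin L, max (w k - c) 0
  have hδS : ε / √2 ≤ S := div_sqrt_two_le_of_sq_add_eq (sum_nonneg fun k _ => le_max_right _ _)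
    (sum_sq_le_sq_sum_of_nonneg fun k _ => le_max_right _ _) hc
  have hε_eq : √(S ^ 2 + ∑ j, max (w j - c) 0 ^ 2) = ε := by rw [hc, Real.sqrt_sq hε.le]
  ext j
  simp only [inflatedArgmax, Set.mem_ofPred_eq]
  constructor
  · intro hlt
    by_contra! hj
    linarith [sqrt_le_infDist_Rset (ε := ε) (by linarith : w j ≤ c) (by linarith)]
  · intro hj
    have hgap : max (c + ε / √2 - w j) 0 < S :=
      max_lt (by linarith) (hδS.trans_lt' (by positivity))
    calc infDist w (Rset L ε j)
        ≤ √(max (c + ε / √2 - w j) 0 ^ 2 + ∑ i, max (w i - c) 0 ^ 2) := infDist_Rset_le w j c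
      _ < √(S ^ 2 + ∑ i, max (w i - c) 0 ^ 2) := by gcongr
      _ = ε := hε_eq

/-- `argmax^ε(w) = {j : w_j > t_ε(w)}`, where `c = c_ε(w)` is the unique solution of
`(Σ_j (w_j − c)_+)² + Σ_j (w_j − c)_+² = ε²` and
`t_ε(w) = c + ε/√2 − Σ_j (w_j − c)_+`. -/
theorem inflatedArgmax_eq_threshold (L : ℕ) (hL : 2 ≤ L) (ε : ℝ) (hε : 0 < ε)
    (w : EuclideanSpace ℝ (Fin L)) (c : ℝ)
    (hc : (∑ j : Fin L, max (w j - c) 0)^2 + ∑ j : Fin L, (max (w j - c) 0)^2 = ε^2) :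
    inflatedArgmax L ε w
      = {j : Fin L | w j > c + ε / Real.sqrt 2 - ∑ k : Fin L, max (w k - c) 0} :=
  inflatedArgmax_eq_threshold_general L ε hε w c hc
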